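/- For every acknowledgment-based deterministic distributed algorithm on a channel with collision detection and every adversary type (ρ, b) with 0 < ρ ≤ 1 and 2ρ + b ≥ 3, there exists a 1-activating injection pattern admissible for the adversary of type (ρ, b) — namely, injecting two packets into one passive station in one round and one packet into another passive station in the next round, and nothing else — such that in the resulting execution some injected packet is never heard. Hence no acknowledgment-based algorithm is fair against a 1-activating adversary of type (ρ, b) with 2ρ + b ≥ 3. -/
import Mathlib


/-- Feedback that a station receives from the channel in a round. -/
inductive Feedback where
  | silence : Feedback
  | collision : Feedback
  | heard : Bool → Feedback

/-- A deterministic distributed algorithm. -/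
structure Algo where
  State : Type
  init : State
  transmits : State → Bool
  step : State → Feedback → Bool → State

/-- A 1-activating injection pattern `a` (in round `t`, a fresh passive station labelled `t`
is activated with `a t` packets, when `a t > 0`) is admissible for the leaky-bucket
adversary of type `(ρ, b)` if in every contiguous interval of rounds the total number of
injected packets is at most `ρ·|τ| + b`. -/
def Admissible (ρ : ℝ) (b : ℕ) (a : ℕ → ℕ) : Prop :=
  ∀ s n : ℕ, ((∑ t ∈ Finset.Ico s (s + n), a t : ℕ) : ℝ) ≤ ρ * n + b

/-- The execution of an acknowledgment-based algorithm `A` against the 1-activating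
injection pattern `a`: stations are identified with their activation rounds; a passive
station is always in the initial state, and an active station resets its state to the
initial state in a round in which a packet it transmitted is heard.
`(execAck A a t).1 v` is the state of station `v` at the beginning of round `t`, and
`(execAck A a t).2 v` the number of its pending packets at the beginning of round `t`. -/
def execAck (A : Algo) (a : ℕ → ℕ) : ℕ → (ℕ → A.State) × (ℕ → ℕ)
  | 0 => (fun _ => A.init, fun _ => 0)
  | t + 1 =>
    let st := (execAck A a t).1
    let pend := (execAck A a t).2
    let tx : Finset ℕ := (Finset.range t).filter fun v => 0 < pend v ∧ A.transmits (st v)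
    let fb : ℕ → Feedback := fun v =>
      if tx.card = 0 then Feedback.silence
      else if tx.card = 1 then Feedback.heard (decide (v ∈ tx))
      else Feedback.collision
    (fun v =>
      if pend v = 0 then A.init
      else if v ∈ tx ∧ tx.card = 1 then A.init
      else A.step (st v) (fb v) false,
     fun v => (if v ∈ tx ∧ tx.card = 1 then pend v - 1 else pend v) + (if v = t then a t else 0))

/-! ### Auxiliary machinery -/

/-- The set of stations transmitting in round `t`. -/
def txSet (A : Algo) (a : ℕ → ℕ) (t : ℕ) : Finset ℕ :=
  (Finset.range t).filter fun v =>
    0 < (execAck A a t).2 v ∧ A.transmits ((execAck A a t).1 v)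

/-- The feedback function of round `t`. -/
def fbF (A : Algo) (a : ℕ → ℕ) (t : ℕ) (v : ℕ) : Feedback :=
  if (txSet A a t).card = 0 then Feedback.silence
  else if (txSet A a t).card = 1 then Feedback.heard (decide (v ∈ txSet A a t))
  else Feedback.collision

lemma st_succ (A : Algo) (a : ℕ → ℕ) (t v : ℕ) :
    (execAck A a (t+1)).1 v =
      (if (execAck A a t).2 v = 0 then A.init
       else if v ∈ txSet A a t ∧ (txSet A a t).card = 1 then A.init
       else A.step ((execAck A a t).1 v) (fbF A a t v) false) := rfl

lemma pend_succ (A : Algo) (a : ℕ → ℕ) (t v : ℕ) :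
    (execAck A a (t+1)).2 v =
      (if v ∈ txSet A a t ∧ (txSet A a t).card = 1
        then (execAck A a t).2 v - 1 else (execAck A a t).2 v)
      + (if v = t then a t else 0) := rfl

/-- The state evolution of a single station that always hears silence. -/
def solo (A : Algo) : ℕ → A.State
  | 0 => A.init
  | k + 1 => A.step (solo A k) Feedback.silence false

/-- Phase 1 invariant: as long as only station `0` (holding two packets injected in
round `0`) is active and it has not transmitted yet, its state follows `solo`. -/
lemma phase1 (A : Algo) (a : ℕ → ℕ) (ha0 : a 0 = 2) :
    ∀ t : ℕ, 1 ≤ t → (∀ u, 1 ≤ u → u < t → a u = 0) →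
    (∀ k, k + 2 ≤ t → A.transmits (solo A k) = false) →
    (execAck A a t).1 0 = solo A (t-1) ∧
      ∀ v, (execAck A a t).2 v = if v = 0 then 2 else 0 := by
  intro t
  induction t with
  | zero => omega
  | succ t ih =>
    intro _ hz hnt
    rcases Nat.eq_zero_or_pos t with rfl | ht1
    · -- base case t+1 = 1
      have htx : txSet A a 0 = ∅ := by simp [txSet]
      constructor
      · simp [st_succ, execAck, solo]
      · intro v
        simp only [pend_succ, htx, Finset.notMem_empty, false_and, if_false, execAck]
        by_cases hv : v = 0 <;> simp [hv, ha0]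
    · obtain ⟨hst, hpend⟩ := ih ht1 (fun u h1 h2 => hz u h1 (by omega))
        (fun k hk => hnt k (by omega))
      have htx : txSet A a t = ∅ := by
        apply Finset.filter_eq_empty_iff.mpr
        rintro v hv ⟨hp, htr⟩
        have hv0 : v = 0 := by
          by_contra h
          rw [hpend v, if_neg h] at hp; omega
        subst hv0
        rw [hst, hnt (t-1) (by omega)] at htr
        exact Bool.false_ne_true htr
      have hcard : (txSet A a t).card = 0 := by rw [htx]; rfl
      have hfb : fbF A a t 0 = Feedback.silence := by simp [fbF, hcard]
      constructor
      · rw [st_succ, if_neg (by rw [hpend 0]; simp),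
          if_neg (by rw [htx]; simp), hfb, hst]
        have : t + 1 - 1 = (t - 1) + 1 := by omega
        rw [this]; rfl
      · intro v
        rw [pend_succ, if_neg (by rw [htx]; simp), hpend v]
        have hat : a t = 0 := hz t ht1 (by omega)
        by_cases hv : v = t <;> simp [hv, hat]

lemma sum_le_three (r : ℕ) (a : ℕ → ℕ)
    (hp : ∀ u, a u ≤ (if u = 0 then 2 else 0) + (if u = r then 1 else 0)) :
    ∀ s n : ℕ, (∑ t ∈ Finset.Ico s (s + n), a t) ≤ 3 := by
  intro s n
  calc ∑ t ∈ Finset.Ico s (s + n), a t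
      ≤ ∑ t ∈ Finset.Ico s (s + n),
          ((if t = 0 then 2 else 0) + (if t = r then 1 else 0)) :=
        Finset.sum_le_sum fun t _ => hp t
    _ = (∑ t ∈ Finset.Ico s (s + n), (if t = 0 then 2 else 0))
        + (∑ t ∈ Finset.Ico s (s + n), (if t = r then 1 else 0)) :=
        Finset.sum_add_distrib
    _ ≤ 2 + 1 := by
        apply add_le_add
        · rw [Finset.sum_ite_eq']; split_ifs <;> omega
        · rw [Finset.sum_ite_eq']; split_ifs <;> omega
    _ = 3 := rfl

lemma adm_of (ρ : ℝ) (b : ℕ) (h0 : 0 < ρ) (h1 : ρ ≤ 1) (h3 : 3 ≤ 2 * ρ + (b : ℝ))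
    (a : ℕ → ℕ) (h2 : ∀ t, a t ≤ 2)
    (hsum : ∀ s n : ℕ, (∑ t ∈ Finset.Ico s (s + n), a t) ≤ 3) :
    Admissible ρ b a := by
  intro s n
  match n with
  | 0 => simp
  | 1 =>
    have hIco : Finset.Ico s (s + 1) = {s} := by
      rw [Finset.Ico_add_one_right_eq_Icc, Finset.Icc_self]
    rw [hIco, Finset.sum_singleton]
    have : ((a s : ℕ) : ℝ) ≤ 2 := by exact_mod_cast h2 s
    push_cast
    linarith
  | (n + 2) =>
    have h : ((∑ t ∈ Finset.Ico s (s + (n + 2)), a t : ℕ) : ℝ) ≤ 3 := by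
      exact_mod_cast hsum s (n + 2)
    have hn : (0 : ℝ) ≤ ρ * n := by positivity
    have hc : ((n + 2 : ℕ) : ℝ) = (n : ℝ) + 2 := by push_cast; ring
    rw [hc]
    nlinarith

/-- for every acknowledgment-based deterministic distributed algorithm and
every adversary type `(ρ, b)` with `0 < ρ ≤ 1` and `2ρ + b ≥ 3`, there is an admissible
1-activating injection pattern such that some injected packet is never heard; hence no
acknowledgment-based algorithm is fair against such an adversary. -/
theorem no_ack_based_algorithm_fair (A : Algo) (ρ : ℝ) (b : ℕ)
    (h0 : 0 < ρ) (h1 : ρ ≤ 1) (hb : 0 < b) (h3 : 3 ≤ 2 * ρ + (b : ℝ)) :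
    ∃ a : ℕ → ℕ, Admissible ρ b a ∧
      ∃ v : ℕ, 0 < a v ∧ ∀ t : ℕ, v < t → 0 < (execAck A a t).2 v := by
  by_cases hex : ∃ k, A.transmits (solo A k) = true
  · -- the algorithm eventually transmits when hearing only silence
    classical
    set k0 := Nat.find hex with hk0
    set r := k0 + 1 with hr
    have hr1 : 1 ≤ r := by omega
    set a : ℕ → ℕ := fun u => if u = 0 then 2 else if u = r then 1 else 0 with ha
    have ha0 : a 0 = 2 := by simp [ha]
    have haz : ∀ u, u ≠ 0 → u ≠ r → a u = 0 := by intro u h1 h2; simp [ha, h1, h2]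
    -- phase 1 holds up to round r
    have hP1 : ∀ t, 1 ≤ t → t ≤ r →
        (execAck A a t).1 0 = solo A (t-1) ∧
          ∀ v, (execAck A a t).2 v = if v = 0 then 2 else 0 := by
      intro t h1t htr
      refine phase1 A a ha0 t h1t (fun u hu1 hu2 => haz u (by omega) (by omega)) ?_
      intro k hk
      have hklt : k < Nat.find hex := by omega
      simpa using Nat.find_min hex hklt
    obtain ⟨hst, hpend⟩ := hP1 r hr1 le_rfl
    have htr0 : A.transmits ((execAck A a r).1 0) = true := by
      rw [hst]
      have : r - 1 = k0 := by omega
      rw [this]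
      exact Nat.find_spec hex
    have htx : txSet A a r = {0} := by
      ext v
      simp only [txSet, Finset.mem_filter, Finset.mem_range, Finset.mem_singleton]
      constructor
      · rintro ⟨-, hp, -⟩
        by_contra hv
        rw [hpend v, if_neg hv] at hp; omega
      · rintro rfl
        exact ⟨by omega, by rw [hpend 0]; simp, htr0⟩
    have hcard : (txSet A a r).card = 1 := by rw [htx]; rfl
    have h0r : (0 : ℕ) ≠ r := by omega
    have E1 : (execAck A a (r+1)).1 0 = A.init := by
      rw [st_succ, if_neg (by rw [hpend 0]; simp),
        if_pos ⟨by rw [htx]; simp, hcard⟩]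
    have E2 : (execAck A a (r+1)).1 r = A.init := by
      rw [st_succ, if_pos (by rw [hpend r, if_neg (Ne.symm h0r)])]
    have E3 : (execAck A a (r+1)).2 0 = 1 := by
      rw [pend_succ, if_pos ⟨by rw [htx]; simp, hcard⟩, hpend 0, if_pos rfl,
        if_neg h0r]
    have E4 : (execAck A a (r+1)).2 r = 1 := by
      rw [pend_succ, if_neg (by rw [htx]; simp [Ne.symm h0r]),
        hpend r, if_neg (Ne.symm h0r), if_pos rfl]
      simp [ha, Ne.symm h0r]
    have E5 : ∀ v, v ≠ 0 → v ≠ r → (execAck A a (r+1)).2 v = 0 := by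
      intro v hv0 hvr
      rw [pend_succ, if_neg (by rw [htx]; simp [hv0]), hpend v, if_neg hv0,
        if_neg hvr]
    -- phase 2 invariant
    have hP2 : ∀ t, r + 1 ≤ t →
        (execAck A a t).1 0 = (execAck A a t).1 r ∧
        (execAck A a t).2 0 = 1 ∧ (execAck A a t).2 r = 1 ∧
        ∀ v, v ≠ 0 → v ≠ r → (execAck A a t).2 v = 0 := by
      intro t
      induction t with
      | zero => omega
      | succ t ih =>
        intro ht
        rcases Nat.lt_or_ge t (r+1) with hlt | hge
        · have : t = r := by omega
          subst this
          exact ⟨E1.trans E2.symm, E3, E4, E5⟩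
        · obtain ⟨h01, hp0, hpr, hpz⟩ := ih hge
          have hsub : txSet A a t ⊆ {0, r} := by
            intro v hv
            simp only [txSet, Finset.mem_filter] at hv
            obtain ⟨-, hp, -⟩ := hv
            simp only [Finset.mem_insert, Finset.mem_singleton]
            by_contra hc
            push_neg at hc
            rw [hpz v hc.1 hc.2] at hp; omega
          have hiff : 0 ∈ txSet A a t ↔ r ∈ txSet A a t := by
            simp only [txSet, Finset.mem_filter, Finset.mem_range, hp0, hpr, h01]
            constructor
            · rintro ⟨-, -, h⟩; exact ⟨by omega, by norm_num, h⟩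
            · rintro ⟨-, -, h⟩; exact ⟨by omega, by norm_num, h⟩
          have hcard1 : (txSet A a t).card ≠ 1 := by
            intro hc
            obtain ⟨x, hx⟩ := Finset.card_eq_one.mp hc
            have hxm : x ∈ txSet A a t := by rw [hx]; exact Finset.mem_singleton_self x
            have := hsub hxm
            simp only [Finset.mem_insert, Finset.mem_singleton] at this
            rcases this with rfl | rfl
            · have hrm : r ∈ txSet A a t := hiff.mp hxm
              rw [hx, Finset.mem_singleton] at hrm
              exact h0r hrm.symm
            · have h0m : (0:ℕ) ∈ txSet A a t := hiff.mpr hxm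
              rw [hx, Finset.mem_singleton] at h0m
              exact h0r h0m
          have hns : ∀ v, ¬(v ∈ txSet A a t ∧ (txSet A a t).card = 1) :=
            fun v h => hcard1 h.2
          have hfb : fbF A a t 0 = fbF A a t r := by
            by_cases h : (txSet A a t).card = 0 <;> simp [fbF, h, hcard1]
          refine ⟨?_, ?_, ?_, ?_⟩
          · have hv0 : (execAck A a t).2 0 ≠ 0 := by rw [hp0]; omega
            have hvr : (execAck A a t).2 r ≠ 0 := by rw [hpr]; omega
            rw [st_succ, st_succ, if_neg hv0, if_neg hvr, if_neg (hns 0),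
              if_neg (hns r), h01, hfb]
          · rw [pend_succ, if_neg (hns 0), if_neg (show (0:ℕ) ≠ t by omega), hp0]
          · rw [pend_succ, if_neg (hns r), if_neg (show r ≠ t by omega), hpr]
          · intro v hv0 hvr
            rw [pend_succ, if_neg (hns v), hpz v hv0 hvr]
            by_cases hvt : v = t
            · subst hvt
              rw [if_pos rfl, haz v (by omega) (by omega)]
            · rw [if_neg hvt]
    refine ⟨a, ?_, 0, by rw [ha0]; omega, ?_⟩
    · refine adm_of ρ b h0 h1 h3 a (fun t => by simp only [ha]; split_ifs <;> omega) ?_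
      refine sum_le_three r a ?_
      intro u
      simp only [ha]
      split_ifs <;> omega
    · intro t ht
      rcases le_or_gt t r with hle | hgt
      · rw [(hP1 t ht hle).2 0, if_pos rfl]; omega
      · rw [(hP2 t hgt).2.1]; omega
  · -- the algorithm never transmits when hearing only silence
    push_neg at hex
    set a : ℕ → ℕ := fun u => if u = 0 then 2 else 0 with ha
    have ha0 : a 0 = 2 := by simp [ha]
    refine ⟨a, ?_, 0, by rw [ha0]; omega, ?_⟩
    · refine adm_of ρ b h0 h1 h3 a (fun t => by simp only [ha]; split_ifs <;> omega) ?_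
      refine sum_le_three 1 a ?_
      intro u
      simp only [ha]
      split_ifs <;> omega
    · intro t ht
      have h := phase1 A a ha0 t ht (fun u h1 h2 => by simp [ha, show u ≠ 0 by omega])
        (fun k hk => by simpa using hex k)
      rw [h.2 0, if_pos rfl]; omega
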